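/- Let φ_λ : ℝ ⋉_{φ₁} ℝ² → SL(2,ℝ)³ be defined via the exponential of the Bianchi type III subalgebra spanned by e₁ = (𝐢,0,0), e₂ = ((1/2)(𝐣+𝐤),0,0), e₃ = (0, -((λ+7)/6)𝐣 + ((11-λ)/6)𝐤, -((λ+9)/6)𝐣 + ((9-λ)/6)𝐤). Then the one-parameter subgroup t ↦ exp(t·e₃) is periodic (nontrivial kernel, isomorphic to ℤ) if and only if the second and third components of e₃ are timelike, which happens exactly when λ = 2n²/(n²−m²) for some integers m > n > 0; otherwise the kernel is trivial. -/

import Mathlib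

/-!
Both components of `e₃` square to scalars: `e₃snd l ^ 2 = l - 2` and `e₃trd l ^ 2 = l`.
If `a ^ 2 = -ω ^ 2` with `ω ≠ 0`, then `ω⁻¹ a` is a square root of `-1`, so `ℂ` embeds in the
algebra with `t ω i ↦ t a`, and `exp (t a) = 1` exactly when `t ω ∈ 2πℤ`. If instead
`a ^ 2 = s ≥ 0` and `a` is not a scalar, `exp (t a)` is never `1` for `t ≠ 0`: for `s = 0` it is
`1 + t a`, and for `s = δ ^ 2 > 0` the number `t δ` lies in the spectrum of `t a`, so `e ^ (t δ) ≠ 1`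
lies in the spectrum of `exp (t a)`. Hence a common period forces `l < 0`, both components are
elliptic with frequencies `√(2 - l)` and `√(-l)`, and a common period exists iff
`n √(2 - l) = m √(-l)` for integers `m, n > 0`, i.e. `l = 2n² / (n² - m²)`.
-/

open Matrix

abbrev M2 := Matrix (Fin 2) (Fin 2) ℝ

noncomputable def mj : M2 := !![0, 1; 1, 0]
noncomputable def mk : M2 := !![0, 1; -1, 0]

/-- Second component of e₃ in the Bianchi type III subalgebra. -/
noncomputable def e₃snd (l : ℝ) : M2 := (-(l + 7) / 6) • mj + ((11 - l) / 6) • mk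
/-- Third component of e₃ in the Bianchi type III subalgebra. -/
noncomputable def e₃trd (l : ℝ) : M2 := (-(l + 9) / 6) • mj + ((9 - l) / 6) • mk

open scoped Real

section BanachAlgebra

variable {A : Type*} [NormedRing A] [NormedAlgebra ℝ A]

theorem exp_smul_eq_one_iff_of_mul_self_eq_neg_sq [Nontrivial A] {a : A} {ω : ℝ} (hω : ω ≠ 0)
    (ha : a * a = (-ω ^ 2) • 1) (t : ℝ) :
    NormedSpace.exp (t • a) = 1 ↔ ∃ k : ℤ, t * ω = k * (2 * π) := by
  let : NormedAlgebra ℚ A := .restrictScalars ℚ ℝ A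
  have hJ : (ω⁻¹ • a) * (ω⁻¹ • a) = -1 := by
    rw [smul_mul_smul_comm, ha, smul_smul, ← sq, inv_pow, mul_neg,
      inv_mul_cancel₀ (pow_ne_zero 2 hω), neg_smul, one_smul]
  set φ := Complex.liftAux _ hJ
  have hφ : φ ((t * ω : ℝ) * Complex.I) = t • a := by
    simp [φ, Complex.liftAux_apply, smul_smul, mul_assoc, mul_inv_cancel₀ hω]
  have hcont : Continuous φ := φ.toLinearMap.continuous_of_finiteDimensional
  have hinj : Function.Injective φ := (φ : ℂ →+* A).injective
  rw [← hφ, ← NormedSpace.map_exp φ hcont, ← map_one φ, hinj.eq_iff, ← Complex.exp_eq_exp_ℂ,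
    Complex.exp_eq_one_iff]
  refine exists_congr fun k => ?_
  rw [show (k : ℂ) * (2 * π * Complex.I) = ((k * (2 * π) : ℝ) : ℂ) * Complex.I by push_cast; ring,
    mul_left_inj' Complex.I_ne_zero, Complex.ofReal_inj]

theorem exp_eq_one_add_of_mul_self_eq_zero {x : A} (hx : x * x = 0) :
    NormedSpace.exp x = 1 + x := by
  rw [NormedSpace.exp_eq_tsum ℝ]
  beta_reduce
  rw [tsum_eq_sum (s := {0, 1})]
  · simp
  · intro n hn
    obtain ⟨k, rfl⟩ : ∃ k, n = k + 2 := ⟨n - 2, by simp only [Finset.mem_insert, Finset.mem_singleton, not_or] at hn; omega⟩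
    rw [pow_add, sq, hx, mul_zero, smul_zero]

variable [CompleteSpace A]

theorem exp_smul_ne_one_of_mul_self_eq_sq {a : A} {δ : ℝ} (hδ : 0 < δ)
    (ha : a * a = δ ^ 2 • 1) (hna : a ∉ Set.range (algebraMap ℝ A)) {t : ℝ} (ht : t ≠ 0) :
    NormedSpace.exp (t • a) ≠ 1 := by
  have hspec : t * δ ∈ spectrum ℝ (t • a) := by
    rw [spectrum.mem_iff]
    intro hu
    have hzero : (algebraMap ℝ A (t * δ) - t • a) * (algebraMap ℝ A (t * δ) + t • a) = 0 := by
      simp only [Algebra.algebraMap_eq_smul_one, sub_mul, mul_add, smul_mul_smul, one_mul,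
        mul_one, ha, smul_smul]
      module
    have hsum := hu.mul_right_eq_zero.1 hzero
    refine hna ⟨-δ, ?_⟩
    rw [Algebra.algebraMap_eq_smul_one, mul_smul, ← smul_add, smul_eq_zero] at hsum
    rw [Algebra.algebraMap_eq_smul_one, neg_smul, neg_eq_iff_add_eq_zero]
    exact hsum.resolve_left ht
  have : Nontrivial A := ⟨⟨a, 0, fun h => hna ⟨0, by rw [h, map_zero]⟩⟩⟩
  intro h
  have := spectrum.exp_mem_exp (t • a) hspec
  rw [h, spectrum.one_eq, Set.mem_singleton_iff, ← Real.exp_eq_exp_ℝ, Real.exp_eq_one_iff] at this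
  exact mul_ne_zero ht hδ.ne' this

theorem exp_smul_ne_one_of_mul_self_eq_nonneg {a : A} {s : ℝ} (hs : 0 ≤ s)
    (ha : a * a = s • 1) (hna : a ∉ Set.range (algebraMap ℝ A)) {t : ℝ} (ht : t ≠ 0) :
    NormedSpace.exp (t • a) ≠ 1 := by
  rcases hs.eq_or_lt with rfl | hs
  · have hsq : (t • a) * (t • a) = 0 := by rw [smul_mul_smul, ha, zero_smul, smul_zero]
    rw [exp_eq_one_add_of_mul_self_eq_zero hsq, Ne, add_eq_left, smul_eq_zero]
    rintro (rfl | rfl)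
    exacts [ht rfl, hna ⟨0, map_zero _⟩]
  · exact exp_smul_ne_one_of_mul_self_eq_sq (Real.sqrt_pos.2 hs)
      (by rwa [Real.sq_sqrt hs.le]) hna ht

end BanachAlgebra

theorem smul_mj_add_smul_mk (α β : ℝ) : α • mj + β • mk = !![0, α + β; α - β, 0] := by
  ext i j
  fin_cases i <;> fin_cases j <;> simp [mj, mk, sub_eq_add_neg]

theorem smul_mj_add_smul_mk_mul_self (α β : ℝ) :
    (α • mj + β • mk) * (α • mj + β • mk) = (α ^ 2 - β ^ 2) • 1 := by
  rw [smul_mj_add_smul_mk, mul_fin_two, one_fin_two, sq_sub_sq]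
  simp [mul_comm (α - β)]

theorem e₃snd_mul_self (l : ℝ) : e₃snd l * e₃snd l = (-(2 - l)) • 1 := by
  rw [e₃snd, smul_mj_add_smul_mk_mul_self]
  congr 1
  ring

theorem e₃trd_mul_self (l : ℝ) : e₃trd l * e₃trd l = l • 1 := by
  rw [e₃trd, smul_mj_add_smul_mk_mul_self]
  congr 1
  ring

theorem e₃trd_not_mem_range_algebraMap (l : ℝ) : e₃trd l ∉ Set.range (algebraMap ℝ M2) := by
  rintro ⟨c, hc⟩
  rw [e₃trd, smul_mj_add_smul_mk] at hc
  have h : (0 : ℝ) = -(l + 9) / 6 - (9 - l) / 6 := by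
    simpa [algebraMap_eq_diagonal] using congrFun (congrFun hc 1) 0
  linarith

section MatrixExp

-- `NormedSpace.exp` only sees the topology, which the operator norm shares with the product one.
attribute [local instance] Matrix.linftyOpNormedRing Matrix.linftyOpNormedAlgebra

theorem exp_smul_e₃snd_eq_one_iff {l : ℝ} (hl : l < 2) (t : ℝ) :
    NormedSpace.exp (t • e₃snd l) = 1 ↔ ∃ k : ℤ, t * √(2 - l) = k * (2 * π) :=
  exp_smul_eq_one_iff_of_mul_self_eq_neg_sq (Real.sqrt_pos.2 (sub_pos.2 hl)).ne'
    (by rw [e₃snd_mul_self, Real.sq_sqrt (sub_pos.2 hl).le]) t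

theorem exp_smul_e₃trd_eq_one_iff {l : ℝ} (hl : l < 0) (t : ℝ) :
    NormedSpace.exp (t • e₃trd l) = 1 ↔ ∃ k : ℤ, t * √(-l) = k * (2 * π) :=
  exp_smul_eq_one_iff_of_mul_self_eq_neg_sq (Real.sqrt_pos.2 (neg_pos.2 hl)).ne'
    (by rw [e₃trd_mul_self, Real.sq_sqrt (neg_pos.2 hl).le, neg_neg]) t

theorem exp_smul_e₃trd_ne_one {l : ℝ} (hl : 0 ≤ l) {t : ℝ} (ht : t ≠ 0) :
    NormedSpace.exp (t • e₃trd l) ≠ 1 :=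
  exp_smul_ne_one_of_mul_self_eq_nonneg hl (e₃trd_mul_self l) (e₃trd_not_mem_range_algebraMap l) ht

end MatrixExp

theorem exists_common_period_iff {ω₁ ω₂ : ℝ} (hω₂ : 0 < ω₂) :
    (∃ T : ℝ, T ≠ 0 ∧ (∃ k₁ : ℤ, T * ω₁ = k₁ * (2 * π)) ∧ ∃ k₂ : ℤ, T * ω₂ = k₂ * (2 * π)) ↔
      ∃ m n : ℤ, 0 < n ∧ n * ω₁ = m * ω₂ := by
  constructor
  · rintro ⟨T, hT, ⟨k₁, h₁⟩, ⟨k₂, h₂⟩⟩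
    have hk₂ : k₂ ≠ 0 := by
      rintro rfl
      simp only [Int.cast_zero, zero_mul, mul_eq_zero] at h₂
      exact h₂.elim hT hω₂.ne'
    have hprop : (k₂ : ℝ) * ω₁ = k₁ * ω₂ :=
      mul_left_cancel₀ hT (by linear_combination (k₂ : ℝ) * h₁ - (k₁ : ℝ) * h₂)
    rcases hk₂.lt_or_gt with hneg | hpos
    · exact ⟨-k₁, -k₂, neg_pos.2 hneg, by push_cast; linear_combination -hprop⟩
    · exact ⟨k₁, k₂, hpos, hprop⟩
  · rintro ⟨m, n, hn, h⟩
    refine ⟨2 * π * n / ω₂, by positivity, ⟨m, ?_⟩, ⟨n, by field_simp⟩⟩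
    field_simp
    linear_combination h

theorem intCast_mul_sqrt_two_sub_eq_mul_sqrt_neg_iff {l : ℝ} (hl : l < 0) {m n : ℤ} (hn : 0 < n) :
    (n : ℝ) * √(2 - l) = m * √(-l) ↔ n < m ∧ l = 2 * (n : ℝ) ^ 2 / ((n : ℝ) ^ 2 - (m : ℝ) ^ 2) := by
  have hn' : (0 : ℝ) < n := Int.cast_pos.2 hn
  have hsq : ((n : ℝ) * √(2 - l)) ^ 2 = ((m : ℝ) * √(-l)) ^ 2 ↔
      2 * (n : ℝ) ^ 2 = l * (n ^ 2 - m ^ 2) := by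
    rw [mul_pow, mul_pow, Real.sq_sqrt (by linarith), Real.sq_sqrt (by linarith)]
    constructor <;> intro h <;> linear_combination h
  constructor
  · intro h
    have hm : (0 : ℝ) < m := pos_of_mul_pos_left
      (h ▸ mul_pos hn' (Real.sqrt_pos.2 (by linarith))) (Real.sqrt_nonneg _)
    have h2 := hsq.1 (congrArg (· ^ 2) h)
    have hnm : (n : ℝ) ^ 2 - m ^ 2 < 0 := by nlinarith
    exact ⟨by exact_mod_cast (by nlinarith : (n : ℝ) < m), (eq_div_iff hnm.ne).2 h2.symm⟩
  · rintro ⟨hnm, hl⟩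
    have hnm' : (n : ℝ) < m := by exact_mod_cast hnm
    rw [← sq_eq_sq₀ (by positivity) (mul_nonneg (by linarith) (Real.sqrt_nonneg _)), hsq, hl]
    have : (n : ℝ) ^ 2 - m ^ 2 ≠ 0 := by nlinarith
    field_simp

theorem stmt_19 (l : ℝ) :
    -- the one-parameter subgroup t ↦ exp(t·e₃) of SL(2,ℝ)³ (whose first
    -- component is trivial) is periodic, i.e. has nontrivial kernel,
    ((∃ T : ℝ, T ≠ 0 ∧ NormedSpace.exp (T • e₃snd l) = 1 ∧
        NormedSpace.exp (T • e₃trd l) = 1) ↔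
      -- iff the second and third components of e₃ are timelike with
      -- commensurable periods, which happens exactly when
      -- λ = 2n²/(n²−m²) for some integers m > n > 0;
      (∃ m n : ℤ, m > n ∧ n > 0 ∧ l = 2 * (n : ℝ) ^ 2 / ((n : ℝ) ^ 2 - (m : ℝ) ^ 2))) := by
  constructor
  · rintro ⟨T, hT, h₂, h₃⟩
    have hl : l < 0 := not_le.1 fun hl => exp_smul_e₃trd_ne_one hl hT h₃
    rw [exp_smul_e₃snd_eq_one_iff (by linarith)] at h₂
    rw [exp_smul_e₃trd_eq_one_iff hl] at h₃
    obtain ⟨m, n, hn, h⟩ :=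
      (exists_common_period_iff (Real.sqrt_pos.2 (neg_pos.2 hl))).1 ⟨T, hT, h₂, h₃⟩
    obtain ⟨hnm, hl_eq⟩ := (intCast_mul_sqrt_two_sub_eq_mul_sqrt_neg_iff hl hn).1 h
    exact ⟨m, n, hnm, hn, hl_eq⟩
  · rintro ⟨m, n, hnm, hn, hl⟩
    have hn' : (0 : ℝ) < n := by exact_mod_cast hn
    have hnm' : (n : ℝ) < m := by exact_mod_cast hnm
    have hl₀ : l < 0 := hl ▸ div_neg_of_pos_of_neg (by positivity) (by nlinarith)
    simp_rw [exp_smul_e₃snd_eq_one_iff (by linarith : l < 2), exp_smul_e₃trd_eq_one_iff hl₀]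
    exact (exists_common_period_iff (Real.sqrt_pos.2 (neg_pos.2 hl₀))).2
      ⟨m, n, hn, (intCast_mul_sqrt_two_sub_eq_mul_sqrt_neg_iff hl₀ hn).2 ⟨hnm, hl⟩⟩
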